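/- For every integer n ≥ 0, every integer r ≥ 1 and every real number x, E_{n,λ}^{(r)}(x+2) + Σ_{l=0}^{r−1} 2^l·E_{n,λ}^{(r−l)}(x−l) = 2^r·(x−r+2)_{n,λ}. -/

import Mathlib

/-!
The degenerate exponentials multiply like exponentials, `e_λ^a e_λ^b = e_λ^{a+b}` (a Vandermonde
identity for `(x)_{n,λ}`), so `e_λ^{x+2} + e_λ^x = e_λ^{x+1} (e_λ + e_λ^{-1})`. Cancelling powers of
the nonzero series `e_λ + e_λ^{-1}` in the domain `ℝ[[t]]`, the defining identity yields the shift
relations `E^{(r)}(x+2) + E^{(r)}(x) = 2 E^{(r-1)}(x+1)` for `r ≥ 2` and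
`E^{(1)}(x+2) + E^{(1)}(x) = 2 (x+1)_{n,λ}`. Induction on `r`, using the relation at order `r` and
the induction hypothesis at `x - 1`, then telescopes the sum.
-/

open Finset PowerSeries

/-- degenerate falling factorial `(x)_{n,λ}`; `dff 1 x n` is the ordinary falling factorial. -/
noncomputable def dff (lam x : ℝ) (n : ℕ) : ℝ := ∏ i ∈ Finset.range n, (x - (i : ℝ) * lam)

/-- `(1)_{n,1/λ} = ∏_{i<n} (1 - i/λ)`. -/
noncomputable def oneFall (lam : ℝ) (n : ℕ) : ℝ := ∏ i ∈ Finset.range n, (1 - (i : ℝ) / lam)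

/-- degenerate exponential `e_λ^x(t)` as a formal power series. -/
noncomputable def degExp (lam x : ℝ) : PowerSeries ℝ :=
  PowerSeries.mk fun n => dff lam x n / n.factorial

/-- `(1+t)^y = Σ_{n≥0} (y)_n t^n/n!`. -/
noncomputable def onePlus (y : ℝ) : PowerSeries ℝ :=
  PowerSeries.mk fun n => dff 1 y n / n.factorial

/-- `(1-t)^y = Σ_{n≥0} (y)_n (-1)^n t^n/n!`. -/
noncomputable def oneMinus (y : ℝ) : PowerSeries ℝ :=
  PowerSeries.mk fun n => dff 1 y n * (-1) ^ n / n.factorial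

/-- `log_λ(1+t) = Σ_{n≥1} λ^{n-1} (1)_{n,1/λ} t^n/n!`. -/
noncomputable def degLog (lam : ℝ) : PowerSeries ℝ :=
  PowerSeries.mk fun n => if n = 0 then 0 else lam ^ (n - 1) * oneFall lam n / n.factorial

/-- `log_λ(1-t) = Σ_{n≥1} λ^{n-1} (1)_{n,1/λ} (-1)^n t^n/n!`. -/
noncomputable def degLogNeg (lam : ℝ) : PowerSeries ℝ :=
  PowerSeries.mk fun n =>
    if n = 0 then 0 else lam ^ (n - 1) * oneFall lam n * (-1) ^ n / n.factorial

/-- composition `f(g(t))` of formal power series (the usual composition when the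
constant term of `g` is zero). -/
noncomputable def pcomp (f g : PowerSeries ℝ) : PowerSeries ℝ :=
  PowerSeries.mk fun n =>
    ∑ k ∈ Finset.range (n + 1), (PowerSeries.coeff k f) * (PowerSeries.coeff n (g ^ k))

lemma dff_succ (lam x : ℝ) (n : ℕ) : dff lam x (n + 1) = dff lam x n * (x - n * lam) :=
  prod_range_succ _ _

lemma dff_add (lam a b : ℝ) (n : ℕ) :
    dff lam (a + b) n =
      ∑ ij ∈ antidiagonal n, (n.choose ij.1 : ℝ) * (dff lam a ij.1 * dff lam b ij.2) := by
  induction n with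
  | zero => simp [dff]
  | succ n ih =>
    rw [sum_antidiagonal_choose_succ_mul (fun i j => dff lam a i * dff lam b j), dff_succ, ih,
      sum_mul, add_comm, ← sum_add_distrib]
    refine sum_congr rfl fun ij hij => ?_
    obtain rfl : ij.1 + ij.2 = n := mem_antidiagonal.mp hij
    rw [Nat.choose_symm_add, dff_succ, dff_succ]
    push_cast
    ring

noncomputable def egf (f : ℕ → ℝ) : PowerSeries ℝ := PowerSeries.mk fun n => f n / n.factorial

lemma coeff_egf (f : ℕ → ℝ) (n : ℕ) : coeff n (egf f) = f n / n.factorial := coeff_mk _ _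

lemma egf_injective : Function.Injective egf := fun f g h => funext fun n => by
  have := congrArg (coeff n) h
  rwa [coeff_egf, coeff_egf, div_left_inj' (by positivity)] at this

lemma egf_add (f g : ℕ → ℝ) : egf f + egf g = egf (fun n => f n + g n) := by
  ext n
  simp only [map_add, coeff_egf, add_div]

lemma two_mul_egf (f : ℕ → ℝ) : 2 * egf f = egf (fun n => 2 * f n) := by
  rw [two_mul, egf_add]
  simp only [two_mul]

lemma degExp_eq_egf (lam x : ℝ) : degExp lam x = egf (dff lam x) := rfl

lemma degExp_mul_degExp (lam a b : ℝ) : degExp lam a * degExp lam b = degExp lam (a + b) := by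
  ext n
  simp only [coeff_mul, degExp, coeff_mk]
  rw [dff_add, sum_div]
  refine sum_congr rfl fun ij hij => ?_
  obtain rfl : ij.1 + ij.2 = n := mem_antidiagonal.mp hij
  rw [Nat.cast_add_choose]
  field_simp

lemma degExp_one_add_degExp_neg_one_ne_zero (lam : ℝ) : degExp lam 1 + degExp lam (-1) ≠ 0 := by
  intro h
  have := congrArg (coeff 0) h
  norm_num [degExp, dff] at this

lemma degExp_add_two_add_degExp (lam x : ℝ) :
    degExp lam (x + 2) + degExp lam x = degExp lam (x + 1) * (degExp lam 1 + degExp lam (-1)) := by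
  rw [mul_add, degExp_mul_degExp, degExp_mul_degExp]
  ring_nf

section ShiftRelations

variable {lam : ℝ} {E : ℕ → ℝ → ℕ → ℝ}
  (hE : ∀ r : ℕ, 1 ≤ r → ∀ x : ℝ, (degExp lam 1 + degExp lam (-1)) ^ r *
      PowerSeries.mk (fun n => E r x n / n.factorial) = 2 ^ r * degExp lam x)
include hE

lemma pow_mul_egf {r : ℕ} (hr : 1 ≤ r) (x : ℝ) :
    (degExp lam 1 + degExp lam (-1)) ^ r * egf (E r x) = 2 ^ r * degExp lam x :=
  hE r hr x

lemma egf_shift_add {r : ℕ} (hr : 1 ≤ r) (x : ℝ) :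
    (degExp lam 1 + degExp lam (-1)) ^ (r - 1) * egf (fun n => E r (x + 2) n + E r x n) =
      2 ^ r * degExp lam (x + 1) := by
  set D := degExp lam 1 + degExp lam (-1)
  refine mul_right_cancel₀ (degExp_one_add_degExp_neg_one_ne_zero lam) ?_
  calc D ^ (r - 1) * egf (fun n => E r (x + 2) n + E r x n) * D
      = D ^ r * egf (E r (x + 2)) + D ^ r * egf (E r x) := by
        rw [← egf_add, mul_right_comm, pow_sub_one_mul (by omega), mul_add]
    _ = 2 ^ r * (degExp lam (x + 2) + degExp lam x) := by
        rw [pow_mul_egf hE hr, pow_mul_egf hE hr, mul_add]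
    _ = 2 ^ r * degExp lam (x + 1) * D := by
        rw [degExp_add_two_add_degExp, mul_assoc]

lemma E_one_shift_add (x : ℝ) (n : ℕ) : E 1 (x + 2) n + E 1 x n = 2 * dff lam (x + 1) n := by
  have h := egf_shift_add hE le_rfl x
  rw [pow_zero, one_mul, pow_one, degExp_eq_egf, two_mul_egf] at h
  exact congrFun (egf_injective h) n

lemma E_succ_shift_add {r : ℕ} (hr : 1 ≤ r) (x : ℝ) (n : ℕ) :
    E (r + 1) (x + 2) n + E (r + 1) x n = 2 * E r (x + 1) n := by
  have h := egf_shift_add hE (Nat.le_add_left 1 r) (x := x)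
  rw [Nat.add_sub_cancel, pow_succ', mul_assoc, ← pow_mul_egf hE hr, mul_left_comm,
    two_mul_egf] at h
  exact congrFun (egf_injective (mul_left_cancel₀
    (pow_ne_zero r (degExp_one_add_degExp_neg_one_ne_zero lam)) h)) n

end ShiftRelations

theorem stmt_7_general (lam : ℝ)
    (E : ℕ → ℝ → ℕ → ℝ)
    (hE : ∀ r : ℕ, 1 ≤ r → ∀ x : ℝ, (degExp lam 1 + degExp lam (-1)) ^ r *
      PowerSeries.mk (fun n => E r x n / n.factorial) = 2 ^ r * degExp lam x)
    (n r : ℕ) (hr : 1 ≤ r) (x : ℝ) :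
    E r (x + 2) n + ∑ l ∈ Finset.range r, 2 ^ l * E (r - l) (x - l) n =
      2 ^ r * dff lam (x - r + 2) n := by
  induction r, hr using Nat.le_induction generalizing x with
  | base =>
    rw [sum_range_one, Nat.cast_one, show x - 1 + 2 = x + 1 by ring]
    simpa using E_one_shift_add hE x n
  | succ r hr ih =>
    have hsum : ∑ l ∈ range r, (2 : ℝ) ^ (l + 1) * E (r + 1 - (l + 1)) (x - (l + 1 : ℕ)) n =
        2 * ∑ l ∈ range r, 2 ^ l * E (r - l) (x - 1 - l) n := by
      rw [mul_sum]
      refine sum_congr rfl fun l _ => ?_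
      rw [Nat.add_sub_add_right, pow_succ', mul_assoc]
      push_cast
      ring_nf
    have ih' := ih (x - 1)
    rw [show x - 1 + 2 = x + 1 by ring, show x - 1 - r + 2 = x - (r + 1) + 2 by ring] at ih'
    rw [sum_range_succ', hsum, Nat.sub_zero, pow_zero, one_mul, Nat.cast_zero, sub_zero]
    push_cast
    linear_combination E_succ_shift_add hE hr x n + 2 * ih'

/-- `E_{n,λ}^{(r)}(x+2) + Σ_{l=0}^{r-1} 2^l E_{n,λ}^{(r-l)}(x-l) = 2^r (x-r+2)_{n,λ}`. -/
theorem stmt_7 (lam : ℝ) (hlam : lam ≠ 0)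
    (E : ℕ → ℝ → ℕ → ℝ)
    (hE : ∀ r : ℕ, 1 ≤ r → ∀ x : ℝ, (degExp lam 1 + degExp lam (-1)) ^ r *
      PowerSeries.mk (fun n => E r x n / n.factorial) = 2 ^ r * degExp lam x)
    (n r : ℕ) (hr : 1 ≤ r) (x : ℝ) :
    E r (x + 2) n + ∑ l ∈ Finset.range r, 2 ^ l * E (r - l) (x - l) n =
      2 ^ r * dff lam (x - r + 2) n :=
  stmt_7_general lam E hE n r hr x
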